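/- arXiv:2203.16803 — 5 statements merged into one kernel-verified Lean document; each statement's English description precedes it below -/
import Mathlib

section
/- Let M be a finite MDP with alarm region, let x_0 ∉ X_a be the initial state, and let Δ ∈ [0,1]. Then the supremum of J_M(π) over all history-dependent policies π of M satisfying P^π(∃ t ∈ {0,…,T}: X_t ∈ X_a) ≤ Δ equals the supremum of Ĵ(π̂) over all Markov policies π̂ of the binary augmented MDP M̂ satisfying P^π̂(Y_T = 1) ≤ Δ. -/
/- Common framework: finite MDPs with alarm region, trajectories,
   history-dependent policies, trajectory laws, objectives. -/

attribute [local instance] Classical.propDecidable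

noncomputable section

/-- A finite MDP with alarm region `Xa`, horizon `T ≥ 1`, transition pmf `P`,
running rewards `r` and terminal reward `rT`. -/
structure MDP (X A : Type) [Fintype X] [Fintype A] where
  T : ℕ
  hT : 1 ≤ T
  P : X → A → X → ℝ
  P_nonneg : ∀ x a x', 0 ≤ P x a x'
  P_sum : ∀ x a, ∑ x', P x a x' = 1
  r : Fin T → X → A → ℝ
  rT : X → ℝ
  Xa : Set X

variable {X A : Type} [Fintype X] [Fintype A]

/-- A trajectory `(x₀,…,x_T, a₀,…,a_{T-1})`. -/
abbrev Traj (M : MDP X A) := (Fin (M.T + 1) → X) × (Fin M.T → A)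

/-- A history-dependent randomized policy: at each time `t < T` it maps the
history `(x₀,…,x_t, a₀,…,a_{t-1})` to a pmf on actions. -/
structure HistPolicy (M : MDP X A) where
  π : (t : Fin M.T) → (Fin (t.val + 1) → X) → (Fin t.val → A) → A → ℝ
  nonneg : ∀ t xs as a, 0 ≤ π t xs as a
  sum_one : ∀ t xs as, ∑ a, π t xs as a = 1

/-- A policy is Markov if at each time it depends only on the current state. -/
def IsMarkov {M : MDP X A} (p : HistPolicy M) : Prop :=
  ∀ (t : Fin M.T) (xs xs' : Fin (t.val + 1) → X) (as as' : Fin t.val → A),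
    xs (Fin.last t.val) = xs' (Fin.last t.val) → p.π t xs as = p.π t xs' as'

/-- The state part of the history at time `t` determined by a trajectory. -/
def histStates {M : MDP X A} (τ : Traj M) (t : Fin M.T) : Fin (t.val + 1) → X :=
  fun i => τ.1 (Fin.castLE (by have := t.isLt; omega) i)

/-- The action part of the history at time `t` determined by a trajectory. -/
def histActs {M : MDP X A} (τ : Traj M) (t : Fin M.T) : Fin t.val → A :=
  fun i => τ.2 (Fin.castLE (by have := t.isLt; omega) i)

/-- The probability mass of a trajectory under policy `p` with initial state `x0`. -/
def trajProb (M : MDP X A) (p : HistPolicy M) (x0 : X) (τ : Traj M) : ℝ :=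
  (if τ.1 0 = x0 then (1 : ℝ) else 0) *
    ∏ t : Fin M.T,
      p.π t (histStates τ t) (histActs τ t) (τ.2 t) *
        M.P (τ.1 t.castSucc) (τ.2 t) (τ.1 t.succ)

/-- Probability of an event (a set of trajectories) under the trajectory law. -/
def probEvent (M : MDP X A) (p : HistPolicy M) (x0 : X) (E : Traj M → Prop) : ℝ :=
  ∑ τ : Traj M, if E τ then trajProb M p x0 τ else 0

/-- The objective `J_M(π) = E[Σ_t r_t(X_t,A_t) + r_T(X_T)]`. -/
def J (M : MDP X A) (p : HistPolicy M) (x0 : X) : ℝ :=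
  ∑ τ : Traj M, trajProb M p x0 τ *
    (∑ t : Fin M.T, M.r t (τ.1 t.castSucc) (τ.2 t) + M.rT (τ.1 (Fin.last M.T)))

/-- The binary augmented MDP: the extra `Bool` state records whether an alarm
has been triggered so far. -/
def binAug (M : MDP X A) : MDP (X × Bool) A where
  T := M.T
  hT := M.hT
  P := fun s a s' =>
    if s'.2 = (s.2 || decide (s'.1 ∈ M.Xa)) then M.P s.1 a s'.1 else 0
  P_nonneg := by
    intro s a s'
    try dsimp only
    split
    · exact M.P_nonneg s.1 a s'.1
    · exact le_refl 0
  P_sum := by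
    intro s a
    rw [Fintype.sum_prod_type]
    have h : ∀ x' : X,
        (∑ y : Bool, if y = (s.2 || decide (x' ∈ M.Xa)) then M.P s.1 a x' else 0)
          = M.P s.1 a x' := by
      intro x'; simp
    rw [Finset.sum_congr rfl fun x' _ => h x']
    exact M.P_sum s.1 a
  r := fun t s a => M.r t s.1 a
  rT := fun s => M.rT s.1
  Xa := {s | s.1 ∈ M.Xa}


/-! Trajectories of `binAug M` from `(x0, false)` with positive probability carry the flag
`Y_t = 1[∃ s ≤ t, X_s ∈ X_a]`, since `x0 ∉ X_a`, so lifting is a probability-preserving bijection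
onto them; policies of `M` and of `binAug M` then correspond with equal objectives, and
`{Y_T = 1}` corresponds to a visit of the alarm region. The objective and the law of `Y_T` depend
only on the occupancies `P(X_t = x, A_t = a)` and the law of the final state, and the Markov policy
`π̂_t(a | x) = P(X_t = x, A_t = a) / P(X_t = x)` reproduces these by induction on `t`, through
`P(X_{t+1} = x') = Σ_{x,a} P(X_t = x, A_t = a) P(x' | x, a)`. Hence both constraint sets give the
same set of values. -/

abbrev Hist (X A : Type) (n : ℕ) := (Fin (n + 1) → X) × (Fin n → A)

namespace Hist

def truncate {m n : ℕ} (h : m ≤ n) (η : Hist X A n) : Hist X A m :=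
  (fun i => η.1 (Fin.castLE (Nat.succ_le_succ h) i), fun i => η.2 (Fin.castLE h i))

def init {n : ℕ} (η : Hist X A (n + 1)) : Hist X A n :=
  (Fin.init η.1, Fin.init η.2)

def snocEquiv (n : ℕ) : Hist X A n × A × X ≃ Hist X A (n + 1) where
  toFun z := (Fin.snoc z.1.1 z.2.2, Fin.snoc z.1.2 z.2.1)
  invFun η := (η.init, η.2 (Fin.last n), η.1 (Fin.last (n + 1)))
  left_inv z := by simp [init]
  right_inv η := by simp [init]

theorem sum_succ {n : ℕ} (G : Hist X A (n + 1) → ℝ) :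
    ∑ η, G η = ∑ η : Hist X A n, ∑ a, ∑ y, G (Fin.snoc η.1 y, Fin.snoc η.2 a) := by
  rw [← (snocEquiv n).sum_comp]
  simp only [Fintype.sum_prod_type]
  rfl

end Hist

section HistProb

variable (M : MDP X A) (p : HistPolicy M) (x0 : X)

-- At `n = M.T` this is `trajProb` definitionally, since `Traj M` is `Hist X A M.T`.
def histProb (n : ℕ) (hn : n ≤ M.T) (η : Hist X A n) : ℝ :=
  (if η.1 0 = x0 then (1 : ℝ) else 0) *
    ∏ t : Fin n,
      p.π ⟨t, t.isLt.trans_le hn⟩ (η.truncate t.isLt.le).1 (η.truncate t.isLt.le).2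
          (η.2 t) *
        M.P (η.1 t.castSucc) (η.2 t) (η.1 t.succ)

theorem histProb_zero (h : 0 ≤ M.T) (η : Hist X A 0) :
    histProb M p x0 0 h η = if η.1 0 = x0 then 1 else 0 := by
  simp [histProb]

theorem histProb_succ {n : ℕ} (hn : n + 1 ≤ M.T) (η : Hist X A (n + 1)) :
    histProb M p x0 (n + 1) hn η = histProb M p x0 n (by omega) η.init *
      (p.π ⟨n, hn⟩ η.init.1 η.init.2 (η.2 (Fin.last n)) *
        M.P (η.1 (Fin.last n).castSucc) (η.2 (Fin.last n)) (η.1 (Fin.last (n + 1)))) := by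
  rw [histProb, Fin.prod_univ_castSucc, ← mul_assoc]
  rfl

theorem histProb_nonneg {n : ℕ} (hn : n ≤ M.T) (η : Hist X A n) :
    0 ≤ histProb M p x0 n hn η :=
  mul_nonneg (by positivity)
    (Finset.prod_nonneg fun _ _ => mul_nonneg (p.nonneg _ _ _ _) (M.P_nonneg _ _ _))

theorem sum_histProb_succ {n : ℕ} (hn : n + 1 ≤ M.T) (G : Hist X A n → A → X → ℝ) :
    ∑ η : Hist X A (n + 1), histProb M p x0 (n + 1) hn η *
        G η.init (η.2 (Fin.last n)) (η.1 (Fin.last (n + 1))) =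
      ∑ η : Hist X A n, histProb M p x0 n (by omega) η *
        ∑ a, p.π ⟨n, hn⟩ η.1 η.2 a * ∑ y, M.P (η.1 (Fin.last n)) a y * G η a y := by
  rw [Hist.sum_succ]
  simp only [histProb_succ, Hist.init, Fin.init_snoc, Fin.snoc_last, Fin.snoc_castSucc,
    Finset.mul_sum]
  exact Finset.sum_congr rfl fun η _ => Finset.sum_congr rfl fun a _ =>
    Finset.sum_congr rfl fun y _ => by ring

theorem sum_histProb_succ_init {n : ℕ} (hn : n + 1 ≤ M.T) (g : Hist X A n → ℝ) :
    ∑ η : Hist X A (n + 1), histProb M p x0 (n + 1) hn η * g η.init =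
      ∑ η : Hist X A n, histProb M p x0 n (by omega) η * g η := by
  refine (sum_histProb_succ M p x0 hn fun η _ _ => g η).trans
    (Finset.sum_congr rfl fun η _ => ?_)
  simp only [← Finset.sum_mul, M.P_sum, one_mul, p.sum_one]

theorem sum_trajProb_mul_truncate {n : ℕ} (hn : n ≤ M.T) (g : Hist X A n → ℝ) :
    ∑ τ : Traj M, trajProb M p x0 τ * g (Hist.truncate hn τ) =
      ∑ η : Hist X A n, histProb M p x0 n hn η * g η := by
  induction hn using Nat.decreasingInduction with
  | self => rfl
  | of_succ n hn ih => exact (ih fun η => g η.init).trans (sum_histProb_succ_init M p x0 hn g)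

end HistProb

theorem sum_sum_ite_mul {ι κ : Type} [Fintype ι] [Fintype κ] [DecidableEq κ]
    (w : ι → ℝ) (φ : ι → κ) (W : κ → ℝ) :
    ∑ k, (∑ i, if φ i = k then w i else 0) * W k = ∑ i, w i * W (φ i) := by
  simp only [Finset.sum_mul, ite_mul, zero_mul]
  rw [Finset.sum_comm]
  simp only [Finset.sum_ite_eq, Finset.mem_univ, if_true]

section Occupancy

variable (M : MDP X A) (p : HistPolicy M) (x0 : X)

def stateDist (n : ℕ) (hn : n ≤ M.T) (x : X) : ℝ :=
  ∑ η : Hist X A n, if η.1 (Fin.last n) = x then histProb M p x0 n hn η else 0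

def occupancy (t : Fin M.T) (x : X) (a : A) : ℝ :=
  ∑ η : Hist X A t,
    if η.1 (Fin.last t) = x then histProb M p x0 t t.isLt.le η * p.π t η.1 η.2 a else 0

theorem sum_stateDist_mul {n : ℕ} (hn : n ≤ M.T) (W : X → ℝ) :
    ∑ x, stateDist M p x0 n hn x * W x =
      ∑ η : Hist X A n, histProb M p x0 n hn η * W (η.1 (Fin.last n)) :=
  sum_sum_ite_mul _ _ W

theorem sum_occupancy_mul (t : Fin M.T) (W : X → A → ℝ) :
    ∑ x, ∑ a, occupancy M p x0 t x a * W x a =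
      ∑ η : Hist X A t, histProb M p x0 t t.isLt.le η *
        ∑ a, p.π t η.1 η.2 a * W (η.1 (Fin.last t)) a := by
  simp only [Finset.mul_sum]
  rw [Finset.sum_comm, Finset.sum_comm (s := Finset.univ (α := Hist X A t))]
  refine Finset.sum_congr rfl fun a _ => ?_
  simp only [occupancy, ← mul_assoc]
  exact sum_sum_ite_mul (fun η => histProb M p x0 t t.isLt.le η * p.π t η.1 η.2 a) _ (W · a)

theorem stateDist_nonneg {n : ℕ} (hn : n ≤ M.T) (x : X) : 0 ≤ stateDist M p x0 n hn x :=
  Finset.sum_nonneg fun η _ => by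
    split_ifs
    exacts [histProb_nonneg M p x0 hn η, le_rfl]

theorem occupancy_nonneg (t : Fin M.T) (x : X) (a : A) : 0 ≤ occupancy M p x0 t x a :=
  Finset.sum_nonneg fun η _ => by
    split_ifs
    exacts [mul_nonneg (histProb_nonneg M p x0 _ η) (p.nonneg _ _ _ _), le_rfl]

theorem sum_occupancy (t : Fin M.T) (x : X) :
    ∑ a, occupancy M p x0 t x a = stateDist M p x0 t t.isLt.le x := by
  simp only [occupancy]
  rw [Finset.sum_comm]
  refine Finset.sum_congr rfl fun η _ => ?_
  split_ifs
  · rw [← Finset.mul_sum, p.sum_one, mul_one]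
  · exact Finset.sum_const_zero

theorem occupancy_eq_zero_of_stateDist_eq_zero {t : Fin M.T} {x : X}
    (h : stateDist M p x0 t t.isLt.le x = 0) (a : A) : occupancy M p x0 t x a = 0 :=
  (Finset.sum_eq_zero_iff_of_nonneg fun a _ => occupancy_nonneg M p x0 t x a).mp
    ((sum_occupancy M p x0 t x).trans h) a (Finset.mem_univ a)

theorem stateDist_succ (t : Fin M.T) (x' : X) :
    stateDist M p x0 (t + 1) t.isLt x' = ∑ x, ∑ a, occupancy M p x0 t x a * M.P x a x' := by
  rw [sum_occupancy_mul]
  have key := sum_histProb_succ M p x0 t.isLt fun _ _ y => if y = x' then 1 else 0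
  simp only [mul_ite, mul_one, mul_zero, Finset.sum_ite_eq', Finset.mem_univ, if_true] at key
  rw [← key, stateDist]

theorem J_eq_sum_occupancy :
    J M p x0 = ∑ t : Fin M.T, ∑ x, ∑ a, occupancy M p x0 t x a * M.r t x a +
      ∑ x, stateDist M p x0 M.T le_rfl x * M.rT x := by
  simp only [J, mul_add, Finset.sum_add_distrib, Finset.mul_sum]
  rw [Finset.sum_comm, sum_stateDist_mul]
  congr 1
  refine Finset.sum_congr rfl fun t _ => ?_
  rw [sum_occupancy_mul]
  have key := sum_histProb_succ M p x0 t.isLt fun η a _ => M.r t (η.1 (Fin.last t)) a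
  simp only [← Finset.sum_mul, M.P_sum, one_mul] at key
  exact (sum_trajProb_mul_truncate M p x0 t.isLt
    fun η => M.r t (η.1 (Fin.last t).castSucc) (η.2 (Fin.last t))).trans key

theorem probEvent_eq_sum_mul (E : Traj M → Prop) :
    probEvent M p x0 E = ∑ τ, trajProb M p x0 τ * if E τ then 1 else 0 := by
  simp only [probEvent, mul_ite, mul_one, mul_zero]

theorem probEvent_final (S : X → Prop) :
    probEvent M p x0 (fun τ => S (τ.1 (Fin.last M.T))) =
      ∑ x, stateDist M p x0 M.T le_rfl x * if S x then 1 else 0 := by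
  rw [probEvent_eq_sum_mul, sum_stateDist_mul]
  rfl

end Occupancy

theorem HistPolicy.nonempty_action {M : MDP X A} (p : HistPolicy M) (x : X) : Nonempty A := by
  by_contra h
  rw [not_nonempty_iff] at h
  simpa using p.sum_one ⟨0, M.hT⟩ (fun _ => x) Fin.elim0

section Markovization

variable (M : MDP X A) (p : HistPolicy M) (x0 : X)

-- Where `P(X_t = x) = 0` any distribution will do, as the occupancy of `x` vanishes there.
def markovAction (t : Fin M.T) (x : X) (a : A) : ℝ :=
  haveI := p.nonempty_action x0
  if stateDist M p x0 t t.isLt.le x = 0 then (if a = Classical.arbitrary A then 1 else 0)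
  else occupancy M p x0 t x a / stateDist M p x0 t t.isLt.le x

theorem markovAction_mul_stateDist (t : Fin M.T) (x : X) (a : A) :
    markovAction M p x0 t x a * stateDist M p x0 t t.isLt.le x = occupancy M p x0 t x a := by
  by_cases h : stateDist M p x0 t t.isLt.le x = 0
  · rw [h, mul_zero, occupancy_eq_zero_of_stateDist_eq_zero M p x0 h]
  · rw [markovAction, if_neg h, div_mul_cancel₀ _ h]

def markovization : HistPolicy M where
  π t xs _ a := markovAction M p x0 t (xs (Fin.last t)) a
  nonneg t xs _ a := by
    unfold markovAction
    split_ifs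
    exacts [zero_le_one, le_rfl, div_nonneg (occupancy_nonneg ..) (stateDist_nonneg ..)]
  sum_one t xs _ := by
    unfold markovAction
    split_ifs with h
    · simp
    · rw [← Finset.sum_div, sum_occupancy, div_self h]

theorem isMarkov_markovization : IsMarkov (markovization M p x0) := by
  intro t xs xs' _ _ h
  funext a
  exact congrArg (markovAction M p x0 t · a) h

theorem occupancy_markovization (t : Fin M.T)
    (h : ∀ x, stateDist M (markovization M p x0) x0 t t.isLt.le x =
      stateDist M p x0 t t.isLt.le x) (x : X) (a : A) :
    occupancy M (markovization M p x0) x0 t x a = occupancy M p x0 t x a := by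
  rw [← markovAction_mul_stateDist M p x0, ← h, stateDist, Finset.mul_sum, occupancy]
  refine Finset.sum_congr rfl fun η _ => ?_
  split_ifs with hx
  · rw [mul_comm, ← hx]
    rfl
  · exact (mul_zero _).symm

theorem stateDist_markovization {n : ℕ} (hn : n ≤ M.T) (x : X) :
    stateDist M (markovization M p x0) x0 n hn x = stateDist M p x0 n hn x := by
  induction n generalizing x with
  | zero => simp only [stateDist, histProb_zero]
  | succ n ih =>
    rw [stateDist_succ _ _ _ ⟨n, hn⟩, stateDist_succ _ _ _ ⟨n, hn⟩]
    simp only [occupancy_markovization M p x0 ⟨n, hn⟩ fun x => ih _ x]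

theorem exists_isMarkov_policy :
    ∃ q : HistPolicy M, IsMarkov q ∧ J M q x0 = J M p x0 ∧
      ∀ S : X → Prop, probEvent M q x0 (fun τ => S (τ.1 (Fin.last M.T))) =
        probEvent M p x0 (fun τ => S (τ.1 (Fin.last M.T))) := by
  refine ⟨markovization M p x0, isMarkov_markovization M p x0, ?_, fun S => ?_⟩
  · simp only [J_eq_sum_occupancy, stateDist_markovization,
      occupancy_markovization M p x0 _ fun x => stateDist_markovization M p x0 _ x]
  · simp only [probEvent_final, stateDist_markovization]

end Markovization

section Lift

def liftStates (M : MDP X A) {n : ℕ} (xs : Fin (n + 1) → X) : Fin (n + 1) → X × Bool :=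
  fun i => (xs i, decide (∃ j ≤ i, xs j ∈ M.Xa))

def liftTraj (M : MDP X A) (τ : Traj M) : Traj (binAug M) := (liftStates M τ.1, τ.2)

def HistPolicy.AgreeOnLift {M : MDP X A} (p : HistPolicy M) (q : HistPolicy (binAug M)) : Prop :=
  ∀ t xs as a, q.π t (liftStates M xs) as a = p.π t xs as a

def HistPolicy.toBinAug {M : MDP X A} (p : HistPolicy M) : HistPolicy (binAug M) where
  π t xs as a := p.π t (fun i => (xs i).1) as a
  nonneg t _ as a := p.nonneg t _ as a
  sum_one t _ as := p.sum_one t _ as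

def HistPolicy.ofBinAug {M : MDP X A} (q : HistPolicy (binAug M)) : HistPolicy M where
  π t xs as a := q.π t (liftStates M xs) as a
  nonneg t _ as a := q.nonneg t _ as a
  sum_one t _ as := q.sum_one t _ as

variable (M : MDP X A)

theorem liftStates_castLE {m n : ℕ} (h : m + 1 ≤ n + 1) (xs : Fin (n + 1) → X) :
    (fun i => liftStates M xs (Fin.castLE h i)) = liftStates M (fun i => xs (Fin.castLE h i)) := by
  funext i
  refine Prod.ext rfl (decide_eq_decide.mpr ⟨?_, ?_⟩)
  · rintro ⟨j, hj, hxj⟩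
    have := i.isLt
    exact ⟨⟨j, by simp only [Fin.le_def, Fin.val_castLE] at hj; omega⟩, hj, hxj⟩
  · rintro ⟨j, hj, hxj⟩
    exact ⟨Fin.castLE h j, hj, hxj⟩

theorem liftStates_zero_snd {n : ℕ} (xs : Fin (n + 1) → X) (h : xs 0 ∉ M.Xa) :
    (liftStates M xs 0).2 = false := by
  simpa [liftStates, nonpos_iff_eq_zero] using h

theorem liftStates_succ_snd {n : ℕ} (xs : Fin (n + 1) → X) (i : Fin n) :
    (liftStates M xs i.succ).2 =
      ((liftStates M xs i.castSucc).2 || decide (xs i.succ ∈ M.Xa)) := by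
  have hle : ∀ j : Fin (n + 1), j ≤ i.succ ↔ j ≤ i.castSucc ∨ j = i.succ := fun j => by
    simp only [Fin.le_def, Fin.ext_iff, Fin.val_succ, Fin.val_castSucc]
    omega
  simp only [liftStates, hle, or_and_right, exists_or, exists_eq_left, Bool.decide_or]

theorem liftTraj_injective : Function.Injective (liftTraj M) := fun _ _ h =>
  Prod.ext (funext fun i => congrArg (fun σ : Traj (binAug M) => (σ.1 i).1) h)
    (congrArg (fun σ : Traj (binAug M) => σ.2) h)

theorem trajProb_liftTraj {x0 : X} (hx0 : x0 ∉ M.Xa) {p : HistPolicy M}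
    {q : HistPolicy (binAug M)} (hpq : p.AgreeOnLift q) (τ : Traj M) :
    trajProb (binAug M) q (x0, false) (liftTraj M τ) = trajProb M p x0 τ := by
  unfold trajProb
  congr 1
  · have hinit : (liftTraj M τ).1 0 = (x0, false) ↔ τ.1 0 = x0 :=
      ⟨congrArg Prod.fst, fun h => Prod.ext h (liftStates_zero_snd M τ.1 (h ▸ hx0))⟩
    simp only [hinit]
  · refine Finset.prod_congr rfl fun t _ => congrArg₂ (· * ·) ?_ (if_pos ?_)
    · exact (congrArg (q.π t · _ _) (liftStates_castLE M _ τ.1)).trans (hpq _ _ _ _)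
    · exact liftStates_succ_snd M τ.1 t

theorem eq_liftTraj_of_trajProb_ne_zero {x0 : X} (hx0 : x0 ∉ M.Xa) {q : HistPolicy (binAug M)}
    {σ : Traj (binAug M)} (hσ : trajProb (binAug M) q (x0, false) σ ≠ 0) :
    σ = liftTraj M (fun i => (σ.1 i).1, σ.2) := by
  obtain ⟨hinit, hsteps⟩ := mul_ne_zero_iff.mp hσ
  have h0 : σ.1 0 = (x0, false) := by_contra fun h => hinit (if_neg h)
  have hflag : ∀ t : Fin M.T,
      (σ.1 t.succ).2 = ((σ.1 t.castSucc).2 || decide ((σ.1 t.succ).1 ∈ M.Xa)) := fun t =>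
    by_contra fun h => (right_ne_zero_of_mul (Finset.prod_ne_zero_iff.mp hsteps t
      (Finset.mem_univ t))) (if_neg h)
  have hflags : ∀ i : Fin (M.T + 1), (σ.1 i).2 = (liftStates M (fun j => (σ.1 j).1) i).2 := by
    intro i
    induction i using Fin.induction with
    | zero =>
      have hx : (σ.1 0).1 ∉ M.Xa := by simpa [h0] using hx0
      exact (congrArg Prod.snd h0).trans (liftStates_zero_snd M (fun j => (σ.1 j).1) hx).symm
    | succ t ih =>
      exact (hflag t).trans ((congrArg (· || _) ih).trans (liftStates_succ_snd M _ t).symm)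
  exact Prod.ext (funext fun i => Prod.ext rfl (hflags i)) rfl

theorem sum_trajProb_binAug {x0 : X} (hx0 : x0 ∉ M.Xa) {p : HistPolicy M}
    {q : HistPolicy (binAug M)} (hpq : p.AgreeOnLift q) (F : Traj (binAug M) → ℝ) :
    ∑ σ, trajProb (binAug M) q (x0, false) σ * F σ =
      ∑ τ, trajProb M p x0 τ * F (liftTraj M τ) := by
  refine (Fintype.sum_of_injective _ (liftTraj_injective M) _ _ (fun σ hσ => ?_)
    fun τ => by rw [trajProb_liftTraj M hx0 hpq]).symm
  by_contra h
  exact hσ ⟨_, (eq_liftTraj_of_trajProb_ne_zero M hx0 (left_ne_zero_of_mul h)).symm⟩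

theorem liftTraj_last_snd (τ : Traj M) :
    ((liftTraj M τ).1 (Fin.last (binAug M).T)).2 = true ↔ ∃ t, τ.1 t ∈ M.Xa := by
  simp only [liftTraj, liftStates, Fin.le_last, true_and, decide_eq_true_eq]
  exact Iff.rfl

theorem J_binAug {x0 : X} (hx0 : x0 ∉ M.Xa) {p : HistPolicy M}
    {q : HistPolicy (binAug M)} (hpq : p.AgreeOnLift q) :
    J (binAug M) q (x0, false) = J M p x0 :=
  sum_trajProb_binAug M hx0 hpq _

theorem probEvent_binAug_flag {x0 : X} (hx0 : x0 ∉ M.Xa) {p : HistPolicy M}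
    {q : HistPolicy (binAug M)} (hpq : p.AgreeOnLift q) :
    probEvent (binAug M) q (x0, false) (fun σ => (σ.1 (Fin.last (binAug M).T)).2 = true) =
      probEvent M p x0 (fun τ => ∃ t, τ.1 t ∈ M.Xa) := by
  rw [probEvent_eq_sum_mul, probEvent_eq_sum_mul, sum_trajProb_binAug M hx0 hpq]
  simp only [liftTraj_last_snd]
  exact Finset.sum_congr rfl fun τ _ => by congr

end Lift

theorem impact_hist_eq_binAug_markov_general
    (M : MDP X A) (x0 : X) (hx0 : x0 ∉ M.Xa) (Δ : ℝ) :
    sSup {v : ℝ | ∃ p : HistPolicy M,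
        probEvent M p x0 (fun τ => ∃ t, τ.1 t ∈ M.Xa) ≤ Δ ∧ v = J M p x0} =
    sSup {v : ℝ | ∃ q : HistPolicy (binAug M), IsMarkov q ∧
        probEvent (binAug M) q (x0, false)
          (fun σ => (σ.1 (Fin.last (binAug M).T)).2 = true) ≤ Δ ∧
        v = J (binAug M) q (x0, false)} := by
  congr 1
  ext v
  constructor
  · rintro ⟨p, hp, rfl⟩
    have hlift : p.AgreeOnLift p.toBinAug := fun _ _ _ _ => rfl
    obtain ⟨q, hq, hJ, hfinal⟩ := exists_isMarkov_policy (binAug M) p.toBinAug (x0, false)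
    refine ⟨q, hq, ?_, ?_⟩
    · rwa [hfinal (·.2 = true), probEvent_binAug_flag M hx0 hlift]
    · rw [hJ, J_binAug M hx0 hlift]
  · rintro ⟨q, -, hq, rfl⟩
    have hlift : q.ofBinAug.AgreeOnLift q := fun _ _ _ _ => rfl
    exact ⟨q.ofBinAug, by rwa [← probEvent_binAug_flag M hx0 hlift], J_binAug M hx0 hlift⟩

/-- The optimal attack impact over history-dependent policies
under the temporally joint chance constraint equals the optimal impact over
Markov policies of the binary augmented MDP under the final-flag constraint. -/
theorem impact_hist_eq_binAug_markov [Nonempty X] [Nonempty A]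
    (M : MDP X A) (x0 : X) (hx0 : x0 ∉ M.Xa) (Δ : ℝ) (hΔ : Δ ∈ Set.Icc (0 : ℝ) 1) :
    sSup {v : ℝ | ∃ p : HistPolicy M,
        probEvent M p x0 (fun τ => ∃ t, τ.1 t ∈ M.Xa) ≤ Δ ∧ v = J M p x0} =
    sSup {v : ℝ | ∃ q : HistPolicy (binAug M), IsMarkov q ∧
        probEvent (binAug M) q (x0, false)
          (fun σ => (σ.1 (Fin.last (binAug M).T)).2 = true) ≤ Δ ∧
        v = J (binAug M) q (x0, false)} :=
  impact_hist_eq_binAug_markov_general M x0 hx0 Δ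
end
end

section
/- Let M be a finite MDP with alarm region, let x_0 be an initial state, let B ⊆ X, and let Δ ∈ [0,1]. Then the supremum of J_M(π) over all history-dependent policies π of M satisfying P^π(X_T ∈ B) ≤ Δ equals the supremum of J_M(π) over all Markov policies π of M satisfying P^π(X_T ∈ B) ≤ Δ. In other words, for a chance constraint depending only on the marginal distribution of the final state, Markov policies achieve the optimal value. -/
/- Common framework: finite MDPs with alarm region, trajectories,
   history-dependent policies, trajectory laws, objectives. -/

attribute [local instance] Classical.propDecidable

noncomputable section

variable {X A : Type} [Fintype X] [Fintype A]

section MarkovReduction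

set_option linter.unusedSectionVars false

/-- Prefix probability. -/
def Pre (M : MDP X A) (p : HistPolicy M) (x0 : X) (n : ℕ) (hn : n ≤ M.T)
    (xs : Fin (n+1) → X) (as : Fin n → A) : ℝ :=
  (if xs 0 = x0 then (1:ℝ) else 0) *
    ∏ t : Fin n,
      p.π ⟨t.val, lt_of_lt_of_le t.isLt hn⟩
          (fun i => xs (Fin.castLE (Nat.succ_le_succ t.isLt.le) i))
          (fun i => as (Fin.castLE t.isLt.le i)) (as t) *
        M.P (xs t.castSucc) (as t) (xs t.succ)

lemma trajProb_eq_Pre (M : MDP X A) (p : HistPolicy M) (x0 : X) (τ : Traj M) :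
    trajProb M p x0 τ = Pre M p x0 M.T le_rfl τ.1 τ.2 := rfl

lemma snoc_castLE {α : Type} {n m : ℕ} (h1 : m ≤ n + 1) (h : m ≤ n)
    (xs : Fin n → α) (x : α) (i : Fin m) :
    (Fin.snoc xs x : Fin (n+1) → α) (Fin.castLE h1 i) = xs (Fin.castLE h i) := by
  have : (Fin.castLE h1 i) = Fin.castSucc (Fin.castLE h i) := rfl
  rw [this, Fin.snoc_castSucc]

lemma sum_fn_snoc {α : Type} [Fintype α] {n : ℕ} (g : (Fin (n+1) → α) → ℝ) :
    ∑ f : Fin (n+1) → α, g f = ∑ f : Fin n → α, ∑ x : α, g (Fin.snoc f x) := by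
  rw [← (Fin.snocEquiv (fun _ => α)).sum_comp g, Fintype.sum_prod_type]
  rw [Finset.sum_comm]
  rfl

lemma Pre_nonneg (M : MDP X A) (p : HistPolicy M) (x0 : X) (n : ℕ) (hn : n ≤ M.T)
    (xs : Fin (n+1) → X) (as : Fin n → A) : 0 ≤ Pre M p x0 n hn xs as := by
  unfold Pre
  apply mul_nonneg (by positivity)
  exact Finset.prod_nonneg fun t _ => mul_nonneg (p.nonneg _ _ _ _) (M.P_nonneg _ _ _)

lemma Pre_snoc (M : MDP X A) (p : HistPolicy M) (x0 : X) (n : ℕ) (hn : n + 1 ≤ M.T)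
    (xs : Fin (n+1) → X) (as : Fin n → A) (x' : X) (a : A) :
    Pre M p x0 (n+1) hn (Fin.snoc xs x') (Fin.snoc as a) =
    Pre M p x0 n (Nat.le_of_succ_le hn) xs as *
      (p.π ⟨n, hn⟩ xs as a * M.P (xs (Fin.last n)) a x') := by
  unfold Pre
  rw [Fin.prod_univ_castSucc, mul_assoc]
  have h0 : ((Fin.snoc xs x' : Fin (n+2) → X) 0) = xs 0 := by
    have : (0 : Fin (n+2)) = Fin.castSucc (0 : Fin (n+1)) := rfl
    rw [this, Fin.snoc_castSucc]
  have hprod : ∀ s : Fin n,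
      p.π ⟨(Fin.castSucc s).val, lt_of_lt_of_le (Fin.castSucc s).isLt hn⟩
          (fun i => (Fin.snoc xs x' : Fin (n+2) → X)
            (Fin.castLE (Nat.succ_le_succ (Fin.castSucc s).isLt.le) i))
          (fun i => (Fin.snoc as a : Fin (n+1) → A)
            (Fin.castLE (Fin.castSucc s).isLt.le i))
          ((Fin.snoc as a : Fin (n+1) → A) (Fin.castSucc s)) *
        M.P ((Fin.snoc xs x' : Fin (n+2) → X) ((Fin.castSucc s).castSucc))
          ((Fin.snoc as a : Fin (n+1) → A) (Fin.castSucc s))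
          ((Fin.snoc xs x' : Fin (n+2) → X) ((Fin.castSucc s).succ)) =
      p.π ⟨s.val, lt_of_lt_of_le s.isLt (Nat.le_of_succ_le hn)⟩
          (fun i => xs (Fin.castLE (Nat.succ_le_succ s.isLt.le) i))
          (fun i => as (Fin.castLE s.isLt.le i)) (as s) *
        M.P (xs s.castSucc) (as s) (xs s.succ) := by
    intro s
    have hhist : (fun i => (Fin.snoc xs x' : Fin (n+2) → X)
          (Fin.castLE (Nat.succ_le_succ (Fin.castSucc s).isLt.le) i)) =
        (fun i => xs (Fin.castLE (Nat.succ_le_succ s.isLt.le) i)) := by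
      funext i
      exact snoc_castLE _ _ xs x' i
    have hacts : (fun i => (Fin.snoc as a : Fin (n+1) → A)
          (Fin.castLE (Fin.castSucc s).isLt.le i)) =
        (fun i => as (Fin.castLE s.isLt.le i)) := by
      funext i
      exact snoc_castLE _ _ as a i
    rw [show ((Fin.snoc as a : Fin (n+1) → A) (Fin.castSucc s)) = as s from Fin.snoc_castSucc ..]
    rw [show ((Fin.snoc xs x' : Fin (n+2) → X) ((Fin.castSucc s).castSucc)) = xs s.castSucc from
      Fin.snoc_castSucc ..]
    rw [show ((Fin.snoc xs x' : Fin (n+2) → X) ((Fin.castSucc s).succ)) = xs s.succ from by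
      rw [Fin.succ_castSucc, Fin.snoc_castSucc]]
    rw [hhist, hacts]
    rfl
  have hlast :
      p.π ⟨(Fin.last n).val, lt_of_lt_of_le (Fin.last n).isLt hn⟩
          (fun i => (Fin.snoc xs x' : Fin (n+2) → X)
            (Fin.castLE (Nat.succ_le_succ (Fin.last n).isLt.le) i))
          (fun i => (Fin.snoc as a : Fin (n+1) → A)
            (Fin.castLE (Fin.last n).isLt.le i))
          ((Fin.snoc as a : Fin (n+1) → A) (Fin.last n)) *
        M.P ((Fin.snoc xs x' : Fin (n+2) → X) ((Fin.last n).castSucc))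
          ((Fin.snoc as a : Fin (n+1) → A) (Fin.last n))
          ((Fin.snoc xs x' : Fin (n+2) → X) ((Fin.last n).succ)) =
      p.π ⟨n, hn⟩ xs as a * M.P (xs (Fin.last n)) a x' := by
    have hhist : (fun i => (Fin.snoc xs x' : Fin (n+2) → X)
          (Fin.castLE (Nat.succ_le_succ (Fin.last n).isLt.le) i)) = xs := by
      funext i
      have := snoc_castLE (Nat.succ_le_succ (Fin.last n).isLt.le) le_rfl xs x' i
      simpa using this
    have hacts : (fun i => (Fin.snoc as a : Fin (n+1) → A)
          (Fin.castLE (Fin.last n).isLt.le i)) = as := by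
      funext i
      have := snoc_castLE (Fin.last n).isLt.le le_rfl as a i
      simpa using this
    rw [show ((Fin.snoc as a : Fin (n+1) → A) (Fin.last n)) = a from Fin.snoc_last ..]
    rw [show ((Fin.snoc xs x' : Fin (n+2) → X) ((Fin.last n).castSucc)) = xs (Fin.last n) from
      Fin.snoc_castSucc ..]
    rw [show ((Fin.snoc xs x' : Fin (n+2) → X) ((Fin.last n).succ)) = x' from by
      rw [Fin.succ_last, Fin.snoc_last]]
    rw [hhist, hacts]
    rfl
  rw [h0, Finset.prod_congr rfl (fun s _ => hprod s), hlast]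

/-- Summing out the last state/action pair against a general integrand. -/
lemma peel_sum (M : MDP X A) (p : HistPolicy M) (x0 : X) (n : ℕ) (hn : n + 1 ≤ M.T)
    (H : (Fin (n+1) → X) → (Fin n → A) → A → X → ℝ) :
    ∑ xs : Fin (n+1+1) → X, ∑ as : Fin (n+1) → A,
        Pre M p x0 (n+1) hn xs as *
          H (fun i => xs (Fin.castLE (Nat.succ_le_succ (Nat.le_succ n)) i))
            (fun i => as (Fin.castLE (Nat.le_succ n) i))
            (as (Fin.last n)) (xs (Fin.last (n+1)))
    = ∑ xs : Fin (n+1) → X, ∑ as : Fin n → A, Pre M p x0 n (Nat.le_of_succ_le hn) xs as *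
        ∑ a, p.π ⟨n, hn⟩ xs as a * ∑ x', M.P (xs (Fin.last n)) a x' * H xs as a x' := by
  rw [sum_fn_snoc]
  apply Finset.sum_congr rfl
  intro xs _
  have hinner : ∀ x' : X, (∑ as : Fin (n+1) → A,
      Pre M p x0 (n+1) hn (Fin.snoc xs x') as *
        H (fun i => (Fin.snoc xs x' : Fin (n+2) → X) (Fin.castLE (Nat.succ_le_succ (Nat.le_succ n)) i))
          (fun i => as (Fin.castLE (Nat.le_succ n) i))
          (as (Fin.last n)) ((Fin.snoc xs x' : Fin (n+2) → X) (Fin.last (n+1)))) =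
      ∑ as : Fin n → A, ∑ a : A,
        Pre M p x0 n (Nat.le_of_succ_le hn) xs as *
          (p.π ⟨n, hn⟩ xs as a * (M.P (xs (Fin.last n)) a x' * H xs as a x')) := by
    intro x'
    rw [sum_fn_snoc (α := A) (fun as => _)]
    apply Finset.sum_congr rfl
    intro as _
    apply Finset.sum_congr rfl
    intro a _
    rw [Pre_snoc]
    have hhist : (fun i => (Fin.snoc xs x' : Fin (n+2) → X)
        (Fin.castLE (Nat.succ_le_succ (Nat.le_succ n)) i)) = xs := by
      funext i
      have := snoc_castLE (Nat.succ_le_succ (Nat.le_succ n)) le_rfl xs x' i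
      simpa using this
    have hacts : (fun i => (Fin.snoc as a : Fin (n+1) → A)
        (Fin.castLE (Nat.le_succ n) i)) = as := by
      funext i
      have := snoc_castLE (Nat.le_succ n) le_rfl as a i
      simpa using this
    rw [hhist, hacts]
    rw [show ((Fin.snoc as a : Fin (n+1) → A) (Fin.last n)) = a from Fin.snoc_last ..]
    rw [show ((Fin.snoc xs x' : Fin (n+2) → X) (Fin.last (n+1))) = x' from Fin.snoc_last ..]
    ring
  rw [Finset.sum_congr rfl (fun x' _ => hinner x'), Finset.sum_comm]
  apply Finset.sum_congr rfl
  intro as _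
  rw [Finset.mul_sum]
  rw [Finset.sum_comm]
  apply Finset.sum_congr rfl
  intro a _
  rw [Finset.mul_sum, Finset.mul_sum]

lemma master (M : MDP X A) (p : HistPolicy M) (x0 : X) :
    ∀ (j n : ℕ) (h1 : n ≤ M.T), n + j = M.T →
    ∀ (G : (Fin (n+1) → X) → (Fin n → A) → ℝ),
    ∑ xs : Fin (M.T+1) → X, ∑ as : Fin M.T → A, Pre M p x0 M.T le_rfl xs as *
        G (fun i => xs (Fin.castLE (Nat.succ_le_succ h1) i)) (fun i => as (Fin.castLE h1 i))
    = ∑ xs : Fin (n+1) → X, ∑ as : Fin n → A, Pre M p x0 n h1 xs as * G xs as := by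
  intro j
  induction j with
  | zero =>
    intro n h1 hj G
    have : n = M.T := by omega
    subst this
    rfl
  | succ j ih =>
    intro n h1 hj G
    have h2 : n + 1 ≤ M.T := by omega
    have hih := ih (n+1) h2 (by omega)
      (fun xs as => G (fun i => xs (Fin.castLE (Nat.succ_le_succ (Nat.le_succ n)) i))
        (fun i => as (Fin.castLE (Nat.le_succ n) i)))
    have hp := peel_sum M p x0 n h2 (fun xs as _ _ => G xs as)
    refine (hih.trans (hp.trans ?_))
    apply Finset.sum_congr rfl
    intro xs _
    apply Finset.sum_congr rfl
    intro as _
    congr 1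
    have hP : ∀ a, ∑ x', M.P (xs (Fin.last n)) a x' * G xs as = G xs as := fun a => by
      rw [← Finset.sum_mul, M.P_sum, one_mul]
    rw [Finset.sum_congr rfl (fun a _ => by rw [hP a])]
    rw [← Finset.sum_mul, p.sum_one, one_mul]

/-- State marginal at time `n`. -/
def nuM (M : MDP X A) (p : HistPolicy M) (x0 : X) (n : ℕ) (hn : n ≤ M.T) (x : X) : ℝ :=
  ∑ xs : Fin (n+1) → X, ∑ as : Fin n → A,
    Pre M p x0 n hn xs as * (if xs (Fin.last n) = x then 1 else 0)

/-- State-action marginal at time `t < T`. -/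
def muM (M : MDP X A) (p : HistPolicy M) (x0 : X) (t : ℕ) (ht : t < M.T) (x : X) (a : A) : ℝ :=
  ∑ xs : Fin (t+1) → X, ∑ as : Fin t → A,
    Pre M p x0 t (le_of_lt ht) xs as * (if xs (Fin.last t) = x then 1 else 0) *
      p.π ⟨t, ht⟩ xs as a

lemma nuM_nonneg (M : MDP X A) (p : HistPolicy M) (x0 : X) (n : ℕ) (hn : n ≤ M.T) (x : X) :
    0 ≤ nuM M p x0 n hn x :=
  Finset.sum_nonneg fun xs _ => Finset.sum_nonneg fun as _ =>
    mul_nonneg (Pre_nonneg M p x0 n hn xs as) (by positivity)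

lemma muM_nonneg (M : MDP X A) (p : HistPolicy M) (x0 : X) (t : ℕ) (ht : t < M.T) (x : X) (a : A) :
    0 ≤ muM M p x0 t ht x a :=
  Finset.sum_nonneg fun xs _ => Finset.sum_nonneg fun as _ =>
    mul_nonneg (mul_nonneg (Pre_nonneg M p x0 t ht.le xs as) (by positivity)) (p.nonneg _ _ _ _)

/-- `∑_a μ_t(x,a) = ν_t(x)`. -/
lemma sum_muM (M : MDP X A) (p : HistPolicy M) (x0 : X) (t : ℕ) (ht : t < M.T) (x : X) :
    ∑ a, muM M p x0 t ht x a = nuM M p x0 t ht.le x := by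
  unfold muM nuM
  rw [Finset.sum_comm]
  apply Finset.sum_congr rfl
  intro xs _
  rw [Finset.sum_comm]
  apply Finset.sum_congr rfl
  intro as _
  rw [← Finset.mul_sum, p.sum_one, mul_one]

/-- `ν_0 = δ_{x0}`. -/
lemma nuM_zero (M : MDP X A) (p : HistPolicy M) (x0 : X) (x : X) :
    nuM M p x0 0 (Nat.zero_le _) x = if x0 = x then 1 else 0 := by
  unfold nuM Pre
  simp only [Finset.univ_unique, Finset.sum_const, Finset.card_singleton, one_smul,
    Fin.prod_univ_zero, mul_one]
  rw [← (Equiv.funUnique (Fin 1) X).symm.sum_comp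
    (fun xs : Fin 1 → X => (if xs 0 = x0 then (1:ℝ) else 0) * (if xs (Fin.last 0) = x then 1 else 0))]
  simp only [Equiv.funUnique_symm_apply]
  have : ∀ y : X, ((if y = x0 then (1:ℝ) else 0) * (if y = x then 1 else 0)) =
      (if y = x0 then (if x0 = x then (1:ℝ) else 0) else 0) := by
    intro y
    by_cases h : y = x0
    · subst h; simp
    · simp [h]
  show (∑ y : X, (if y = x0 then (1:ℝ) else 0) * (if y = x then 1 else 0)) = if x0 = x then 1 else 0
  rw [Finset.sum_congr rfl (fun y _ => this y)]
  simp

lemma sum_swap4 {α β γ δ : Type} [Fintype α] [Fintype β] [Fintype γ] [Fintype δ]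
    (g : α → β → γ → δ → ℝ) :
    ∑ a, ∑ b, ∑ c, ∑ d, g a b c d = ∑ c, ∑ d, ∑ a, ∑ b, g a b c d := by
  rw [Finset.sum_congr rfl (fun a _ => Finset.sum_comm)]
  rw [Finset.sum_comm]
  apply Finset.sum_congr rfl
  intro c _
  rw [Finset.sum_congr rfl (fun a _ => Finset.sum_comm)]
  rw [Finset.sum_comm]

lemma sum_mu_f (M : MDP X A) (p : HistPolicy M) (x0 : X) (t : ℕ) (ht : t < M.T)
    (f : X → A → ℝ) :
    ∑ x, ∑ a, muM M p x0 t ht x a * f x a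
    = ∑ xs : Fin (t+1) → X, ∑ as : Fin t → A, Pre M p x0 t ht.le xs as *
        ∑ a, p.π ⟨t, ht⟩ xs as a * f (xs (Fin.last t)) a := by
  unfold muM
  have step1 : ∀ x a, (∑ xs : Fin (t+1) → X, ∑ as : Fin t → A,
      Pre M p x0 t ht.le xs as * (if xs (Fin.last t) = x then (1:ℝ) else 0) * p.π ⟨t, ht⟩ xs as a) * f x a
      = ∑ xs : Fin (t+1) → X, ∑ as : Fin t → A,
        Pre M p x0 t ht.le xs as * (if xs (Fin.last t) = x then 1 else 0) * p.π ⟨t, ht⟩ xs as a * f x a := by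
    intro x a
    rw [Finset.sum_mul]
    exact Finset.sum_congr rfl fun xs _ => by rw [Finset.sum_mul]
  rw [Finset.sum_congr rfl (fun x _ => Finset.sum_congr rfl (fun a _ => step1 x a))]
  rw [sum_swap4]
  apply Finset.sum_congr rfl
  intro xs _
  apply Finset.sum_congr rfl
  intro as _
  rw [Finset.sum_comm, Finset.mul_sum]
  apply Finset.sum_congr rfl
  intro a _
  have h2 : ∀ x, Pre M p x0 t ht.le xs as * (if xs (Fin.last t) = x then (1:ℝ) else 0) *
      p.π ⟨t, ht⟩ xs as a * f x a
      = if xs (Fin.last t) = x then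
          Pre M p x0 t ht.le xs as * (p.π ⟨t, ht⟩ xs as a * f x a) else 0 := by
    intro x
    by_cases h : xs (Fin.last t) = x
    · simp only [h, if_true]; ring
    · simp [h]
  rw [Finset.sum_congr rfl (fun x _ => h2 x)]
  simp

lemma sum_nu_f (M : MDP X A) (p : HistPolicy M) (x0 : X) (n : ℕ) (hn : n ≤ M.T)
    (g : X → ℝ) :
    ∑ x, nuM M p x0 n hn x * g x
    = ∑ xs : Fin (n+1) → X, ∑ as : Fin n → A, Pre M p x0 n hn xs as * g (xs (Fin.last n)) := by
  unfold nuM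
  have step1 : ∀ x, (∑ xs : Fin (n+1) → X, ∑ as : Fin n → A,
      Pre M p x0 n hn xs as * (if xs (Fin.last n) = x then (1:ℝ) else 0)) * g x
      = ∑ xs : Fin (n+1) → X, ∑ as : Fin n → A,
        Pre M p x0 n hn xs as * (if xs (Fin.last n) = x then 1 else 0) * g x := by
    intro x
    rw [Finset.sum_mul]
    exact Finset.sum_congr rfl fun xs _ => by rw [Finset.sum_mul]
  rw [Finset.sum_congr rfl (fun x _ => step1 x)]
  rw [Finset.sum_comm]
  apply Finset.sum_congr rfl
  intro xs _
  rw [Finset.sum_comm]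
  apply Finset.sum_congr rfl
  intro as _
  have h2 : ∀ x, Pre M p x0 n hn xs as * (if xs (Fin.last n) = x then (1:ℝ) else 0) * g x
      = if xs (Fin.last n) = x then Pre M p x0 n hn xs as * g x else 0 := by
    intro x
    by_cases h : xs (Fin.last n) = x
    · simp only [h, if_true]; ring
    · simp [h]
  rw [Finset.sum_congr rfl (fun x _ => h2 x)]
  simp

/-- Chapman–Kolmogorov for the marginals. -/
lemma nuM_succ (M : MDP X A) (p : HistPolicy M) (x0 : X) (n : ℕ) (hn : n + 1 ≤ M.T) (x' : X) :
    nuM M p x0 (n+1) hn x' = ∑ x, ∑ a, muM M p x0 n hn x a * M.P x a x' := by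
  rw [sum_mu_f M p x0 n hn (fun x a => M.P x a x')]
  have hp := peel_sum M p x0 n hn (fun _ _ _ xn => if xn = x' then (1:ℝ) else 0)
  refine Eq.trans (hp) ?_
  apply Finset.sum_congr rfl
  intro xs _
  apply Finset.sum_congr rfl
  intro as _
  congr 1
  apply Finset.sum_congr rfl
  intro a _
  congr 1
  simp

/-- For a Markov policy the state-action marginal factorizes. -/
lemma muM_markov [Nonempty A] (M : MDP X A) (q : HistPolicy M) (hq : IsMarkov q) (x0 : X)
    (t : ℕ) (ht : t < M.T) (x : X) (a : A) :
    muM M q x0 t ht x a = nuM M q x0 t ht.le x *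
      q.π ⟨t, ht⟩ (fun _ => x) (fun _ => Classical.arbitrary A) a := by
  unfold muM nuM
  rw [Finset.sum_mul]
  apply Finset.sum_congr rfl
  intro xs _
  rw [Finset.sum_mul]
  apply Finset.sum_congr rfl
  intro as _
  by_cases h : xs (Fin.last t) = x
  · have := hq ⟨t, ht⟩ xs (fun _ => x) as (fun _ => Classical.arbitrary A) h
    rw [this]
  · simp [h]

variable [Nonempty A]

/-- The Markov policy induced by the occupation measures of `p`. -/
def qpol (M : MDP X A) (p : HistPolicy M) (x0 : X) : HistPolicy M where
  π t xs as a :=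
    if 0 < nuM M p x0 t.val t.isLt.le (xs (Fin.last t.val))
    then muM M p x0 t.val t.isLt (xs (Fin.last t.val)) a /
      nuM M p x0 t.val t.isLt.le (xs (Fin.last t.val))
    else (Fintype.card A : ℝ)⁻¹
  nonneg t xs as a := by
    by_cases h : 0 < nuM M p x0 t.val t.isLt.le (xs (Fin.last t.val))
    · rw [if_pos h]
      exact div_nonneg (muM_nonneg M p x0 t.val t.isLt _ _) h.le
    · rw [if_neg h]
      positivity
  sum_one t xs as := by
    by_cases h : 0 < nuM M p x0 t.val t.isLt.le (xs (Fin.last t.val))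
    · simp only [if_pos h]
      rw [← Finset.sum_div, sum_muM, div_self (ne_of_gt h)]
    · simp only [if_neg h, Finset.sum_const, nsmul_eq_mul, Finset.card_univ]
      rw [mul_inv_cancel₀]
      exact_mod_cast Fintype.card_ne_zero

lemma qpol_markov (M : MDP X A) (p : HistPolicy M) (x0 : X) : IsMarkov (qpol M p x0) := by
  intro t xs xs' as as' h
  funext a
  simp only [qpol]
  rw [h]

lemma muM_eq_of_nu (M : MDP X A) (p : HistPolicy M) (x0 : X) (t : ℕ) (ht : t < M.T)
    (h : ∀ x, nuM M (qpol M p x0) x0 t ht.le x = nuM M p x0 t ht.le x) (x : X) (a : A) :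
    muM M (qpol M p x0) x0 t ht x a = muM M p x0 t ht x a := by
  rw [muM_markov M (qpol M p x0) (qpol_markov M p x0) x0 t ht, h x]
  show nuM M p x0 t ht.le x *
      (if 0 < nuM M p x0 t ht.le x
       then muM M p x0 t ht x a / nuM M p x0 t ht.le x
       else (Fintype.card A : ℝ)⁻¹) = muM M p x0 t ht x a
  by_cases hx : 0 < nuM M p x0 t ht.le x
  · rw [if_pos hx, mul_comm, div_mul_cancel₀ _ (ne_of_gt hx)]
  · have h0 : nuM M p x0 t ht.le x = 0 :=
      le_antisymm (not_lt.1 hx) (nuM_nonneg M p x0 t ht.le x)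
    rw [if_neg hx, h0, zero_mul]
    symm
    have hsum := sum_muM M p x0 t ht x
    rw [h0] at hsum
    exact (Finset.sum_eq_zero_iff_of_nonneg
      (fun a _ => muM_nonneg M p x0 t ht x a)).1 hsum a (Finset.mem_univ a)

lemma nuM_eq (M : MDP X A) (p : HistPolicy M) (x0 : X) :
    ∀ (n : ℕ) (hn : n ≤ M.T) (x : X),
    nuM M (qpol M p x0) x0 n hn x = nuM M p x0 n hn x := by
  intro n
  induction n with
  | zero => intro hn x; rw [nuM_zero, nuM_zero]
  | succ n ih =>
    intro hn x
    rw [nuM_succ, nuM_succ]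
    apply Finset.sum_congr rfl
    intro y _
    apply Finset.sum_congr rfl
    intro a _
    rw [muM_eq_of_nu M p x0 n hn (fun z => ih (Nat.le_of_succ_le hn) z) y a]

lemma muM_eq (M : MDP X A) (p : HistPolicy M) (x0 : X) (t : ℕ) (ht : t < M.T) (x : X) (a : A) :
    muM M (qpol M p x0) x0 t ht x a = muM M p x0 t ht x a :=
  muM_eq_of_nu M p x0 t ht (fun z => nuM_eq M p x0 t ht.le z) x a

lemma probEvent_repr (M : MDP X A) (p : HistPolicy M) (x0 : X) (B : Set X) :
    probEvent M p x0 (fun τ => τ.1 (Fin.last M.T) ∈ B) =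
      ∑ x, nuM M p x0 M.T le_rfl x * (if x ∈ B then 1 else 0) := by
  rw [sum_nu_f M p x0 M.T le_rfl (fun x => if x ∈ B then (1:ℝ) else 0)]
  unfold probEvent
  rw [Fintype.sum_prod_type]
  apply Finset.sum_congr rfl
  intro xs _
  apply Finset.sum_congr rfl
  intro as _
  by_cases h : xs (Fin.last M.T) ∈ B
  · rw [if_pos h, if_pos h, mul_one, trajProb_eq_Pre]
  · rw [if_neg h, if_neg h, mul_zero]

lemma r_term (M : MDP X A) (p : HistPolicy M) (x0 : X) (t : Fin M.T) :
    (∑ τ : Traj M, trajProb M p x0 τ * M.r t (τ.1 t.castSucc) (τ.2 t)) =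
      ∑ x, ∑ a, muM M p x0 t.val t.isLt x a * M.r t x a := by
  rw [Fintype.sum_prod_type]
  have hm := master M p x0 (M.T - (t.val+1)) (t.val+1) t.isLt (by omega)
    (fun xs as => M.r t (xs (Fin.castSucc (Fin.last t.val))) (as (Fin.last t.val)))
  refine Eq.trans hm ?_
  rw [sum_mu_f M p x0 t.val t.isLt (fun x a => M.r t x a)]
  have hp := peel_sum M p x0 t.val t.isLt
    (fun xs as a _ => M.r t (xs (Fin.last t.val)) a)
  refine Eq.trans hp ?_
  apply Finset.sum_congr rfl
  intro xs _
  apply Finset.sum_congr rfl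
  intro as _
  congr 1
  apply Finset.sum_congr rfl
  intro a _
  congr 1
  rw [← Finset.sum_mul, M.P_sum, one_mul]

lemma J_repr (M : MDP X A) (p : HistPolicy M) (x0 : X) :
    J M p x0 = (∑ t : Fin M.T, ∑ x, ∑ a, muM M p x0 t.val t.isLt x a * M.r t x a) +
      ∑ x, nuM M p x0 M.T le_rfl x * M.rT x := by
  unfold J
  have hsplit : ∀ τ : Traj M, trajProb M p x0 τ *
      (∑ t : Fin M.T, M.r t (τ.1 t.castSucc) (τ.2 t) + M.rT (τ.1 (Fin.last M.T))) =
      (∑ t : Fin M.T, trajProb M p x0 τ * M.r t (τ.1 t.castSucc) (τ.2 t)) +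
        trajProb M p x0 τ * M.rT (τ.1 (Fin.last M.T)) := by
    intro τ
    rw [mul_add, Finset.mul_sum]
  rw [Finset.sum_congr rfl (fun τ _ => hsplit τ), Finset.sum_add_distrib]
  congr 1
  · rw [Finset.sum_comm]
    exact Finset.sum_congr rfl fun t _ => r_term M p x0 t
  · rw [sum_nu_f M p x0 M.T le_rfl M.rT, Fintype.sum_prod_type]
    rfl

end MarkovReduction

/-- For a chance constraint depending only on the marginal
distribution of the final state, Markov policies achieve the optimal value. -/
theorem final_state_constraint_markov_sufficient [Nonempty X] [Nonempty A]
    (M : MDP X A) (x0 : X) (B : Set X) (Δ : ℝ) (hΔ : Δ ∈ Set.Icc (0 : ℝ) 1) :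
    sSup {v : ℝ | ∃ p : HistPolicy M,
        probEvent M p x0 (fun τ => τ.1 (Fin.last M.T) ∈ B) ≤ Δ ∧ v = J M p x0} =
    sSup {v : ℝ | ∃ p : HistPolicy M, IsMarkov p ∧
        probEvent M p x0 (fun τ => τ.1 (Fin.last M.T) ∈ B) ≤ Δ ∧ v = J M p x0} := by
  have key : ∀ p : HistPolicy M,
      probEvent M (qpol M p x0) x0 (fun τ => τ.1 (Fin.last M.T) ∈ B) =
        probEvent M p x0 (fun τ => τ.1 (Fin.last M.T) ∈ B) ∧
      J M (qpol M p x0) x0 = J M p x0 := by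
    intro p
    constructor
    · rw [probEvent_repr, probEvent_repr]
      exact Finset.sum_congr rfl fun x _ => by rw [nuM_eq M p x0 M.T le_rfl x]
    · rw [J_repr, J_repr]
      exact congrArg₂ (· + ·)
        (Finset.sum_congr rfl fun t _ => Finset.sum_congr rfl fun x _ =>
          Finset.sum_congr rfl fun a _ => by rw [muM_eq M p x0 t.val t.isLt x a])
        (Finset.sum_congr rfl fun x _ => by rw [nuM_eq M p x0 M.T le_rfl x])
  refine congrArg sSup ?_
  ext v
  simp only [Set.mem_setOf_eq]
  constructor
  · rintro ⟨p, hc, hv⟩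
    obtain ⟨hpe, hJ⟩ := key p
    exact ⟨qpol M p x0, qpol_markov M p x0, by rw [hpe]; exact hc, by rw [hv, hJ]⟩
  · rintro ⟨p, _, hc, hv⟩
    exact ⟨p, hc, hv⟩

end
end

section
/- Let M be a finite MDP with alarm region and x_0 an initial state. For every history-dependent policy π̂ of the binary augmented MDP M̂ with initial state (x_0,0), there exists a history-dependent policy π of M with initial state x_0 such that the pushforward of the trajectory law P^π̂ under the projection ((x_0,y_0),…,(x_T,y_T), a_0,…,a_{T−1}) ↦ (x_0,…,x_T, a_0,…,a_{T−1}) equals the trajectory law P^π; equivalently, for every t ∈ {0,…,T} the joint distribution of (X_0,…,X_t, A_0,…,A_{min(t,T−1)}) under P^π equals that under P^π̂. -/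
/- Common framework: finite MDPs with alarm region, trajectories,
   history-dependent policies, trajectory laws, objectives. -/

attribute [local instance] Classical.propDecidable

noncomputable section

variable {X A : Type} [Fintype X] [Fintype A]

/-
Along any augmented trajectory of positive probability the flag starts at `false` and is updated
by `y' = y || (x' ∈ Xa)`, so it is a deterministic function of the state history: whether an alarm
state has been visited at a positive time. A policy of `M` can therefore recompute the flag and
feed it to the augmented policy; the augmented law is then carried by the flag-decorated
trajectories, each with the mass of its projection under the original law.
-/

def alarmFlag {α : Type*} (S : Set α) {n : ℕ} (xs : Fin (n + 1) → α) (i : Fin (n + 1)) : Bool :=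
  decide (∃ j : Fin (n + 1), j ≠ 0 ∧ j ≤ i ∧ xs j ∈ S)

section alarmFlag

variable {α : Type*} (S : Set α) {n : ℕ} (xs : Fin (n + 1) → α)

lemma alarmFlag_zero : alarmFlag S xs 0 = false := by
  simp only [alarmFlag, decide_eq_false_iff_not]
  rintro ⟨j, hj, hj0, -⟩
  exact hj (Fin.le_zero_iff.mp hj0)

lemma alarmFlag_succ (i : Fin n) :
    alarmFlag S xs i.succ = (alarmFlag S xs i.castSucc || decide (xs i.succ ∈ S)) := by
  simp only [alarmFlag, ← Bool.decide_or, decide_eq_decide, Fin.le_castSucc_iff]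
  constructor
  · rintro ⟨j, hj, hji, hjS⟩
    rcases hji.lt_or_eq with hlt | rfl
    exacts [Or.inl ⟨j, hj, hlt, hjS⟩, Or.inr hjS]
  · rintro (⟨j, hj, hji, hjS⟩ | hS)
    exacts [⟨j, hj, hji.le, hjS⟩, ⟨i.succ, Fin.succ_ne_zero i, le_rfl, hS⟩]

lemma alarmFlag_castLE {m : ℕ} (hm : m + 1 ≤ n + 1) (i : Fin (m + 1)) :
    alarmFlag S (fun j => xs (Fin.castLE hm j)) i = alarmFlag S xs (Fin.castLE hm i) := by
  simp only [alarmFlag, decide_eq_decide]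
  constructor
  · rintro ⟨j, hj, hji, hjS⟩
    exact ⟨Fin.castLE hm j, by rwa [← Fin.castLE_zero hm, Ne, Fin.castLE_inj], hji, hjS⟩
  · rintro ⟨j, hj, hji, hjS⟩
    refine ⟨⟨j, lt_of_le_of_lt hji i.isLt⟩, fun h => hj ?_, hji, hjS⟩
    exact Fin.ext (congrArg Fin.val h : (j : ℕ) = 0)

end alarmFlag

variable {M : MDP X A}

lemma binAug_P_of_flag {s s' : X × Bool} (a : A) (h : s'.2 = (s.2 || decide (s'.1 ∈ M.Xa))) :
    (binAug M).P s a s' = M.P s.1 a s'.1 :=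
  if_pos h

lemma flag_of_binAug_P_ne_zero {s s' : X × Bool} {a : A} (h : (binAug M).P s a s' ≠ 0) :
    s'.2 = (s.2 || decide (s'.1 ∈ M.Xa)) := by
  by_contra hflag
  exact h (if_neg hflag)

def forgetFlag (σ : Traj (binAug M)) : Traj M :=
  (fun i => (σ.1 i).1, σ.2)

def flagTraj (τ : Traj M) : Traj (binAug M) :=
  (fun i => (τ.1 i, alarmFlag M.Xa τ.1 i), τ.2)

def liftPolicy (q : HistPolicy (binAug M)) : HistPolicy M where
  π t xs as := q.π t (fun i => (xs i, alarmFlag M.Xa xs i)) as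
  nonneg t _ as := q.nonneg t _ as
  sum_one t _ as := q.sum_one t _ as

lemma trajProb_liftPolicy (q : HistPolicy (binAug M)) (x0 : X) (τ : Traj M) :
    trajProb M (liftPolicy q) x0 τ = trajProb (binAug M) q (x0, false) (flagTraj τ) := by
  have hinit : (flagTraj τ).1 0 = (x0, false) ↔ τ.1 0 = x0 := by
    change (τ.1 0, alarmFlag M.Xa τ.1 0) = (x0, false) ↔ _
    rw [Prod.mk.injEq, alarmFlag_zero, eq_self, and_true]
  have hhist (t : Fin M.T) : histStates (flagTraj τ) t =
      fun i => (histStates τ t i, alarmFlag M.Xa (histStates τ t) i) :=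
    funext fun i => congrArg _ (alarmFlag_castLE M.Xa τ.1 _ i).symm
  have htrans (t : Fin M.T) :
      (binAug M).P ((flagTraj τ).1 t.castSucc) ((flagTraj τ).2 t) ((flagTraj τ).1 t.succ)
        = M.P (τ.1 t.castSucc) (τ.2 t) (τ.1 t.succ) :=
    binAug_P_of_flag _ (alarmFlag_succ M.Xa τ.1 t)
  unfold trajProb
  rw [hinit]
  congr 1
  exact Finset.prod_congr rfl fun t _ =>
    congrArg₂ (· * ·) (congrArg (q.π t · _ _) (hhist t).symm) (htrans t).symm

lemma eq_flagTraj_of_trajProb_ne_zero {q : HistPolicy (binAug M)} {x0 : X}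
    {σ : Traj (binAug M)} (h : trajProb (binAug M) q (x0, false) σ ≠ 0) :
    σ = flagTraj (forgetFlag σ) := by
  obtain ⟨hinit, hsteps⟩ := mul_ne_zero_iff.mp h
  have hσ0 : σ.1 0 = (x0, false) := by
    by_contra h0
    exact hinit (if_neg h0)
  have hflag : ∀ i, (σ.1 i).2 = alarmFlag M.Xa (forgetFlag σ).1 i := by
    intro i
    induction i using Fin.induction with
    | zero => exact (congrArg Prod.snd hσ0).trans (alarmFlag_zero _ _).symm
    | succ t ih =>
      have hP := (mul_ne_zero_iff.mp (Finset.prod_ne_zero_iff.mp hsteps t (Finset.mem_univ t))).2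
      rw [flag_of_binAug_P_ne_zero hP, ih]
      exact (alarmFlag_succ _ _ t).symm
  exact Prod.ext (funext fun i => Prod.ext rfl (hflag i)) rfl

theorem binAug_pushforward_general
    (M : MDP X A) (x0 : X) (q : HistPolicy (binAug M)) :
    ∃ p : HistPolicy M, ∀ τ : Traj M,
      trajProb M p x0 τ =
        ∑ σ : Traj (binAug M),
          if ((fun t => (σ.1 t).1, σ.2) : Traj M) = τ
          then trajProb (binAug M) q (x0, false) σ else 0 := by
  refine ⟨liftPolicy q, fun τ => ?_⟩
  rw [Finset.sum_eq_single (flagTraj τ)]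
  · exact (trajProb_liftPolicy q x0 τ).trans (if_pos rfl).symm
  · intro σ _ hσ
    split_ifs with hproj
    · by_contra h
      exact hσ (hproj ▸ eq_flagTraj_of_trajProb_ne_zero h)
    · rfl
  · exact fun h => (h (Finset.mem_univ _)).elim

/-- Any policy of the binary augmented MDP can be imitated by a
policy of the original MDP: the pushforward of the augmented trajectory law
under the projection forgetting the flag equals the original trajectory law. -/
theorem binAug_pushforward [Nonempty X] [Nonempty A]
    (M : MDP X A) (x0 : X) (q : HistPolicy (binAug M)) :
    ∃ p : HistPolicy M, ∀ τ : Traj M,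
      trajProb M p x0 τ =
        ∑ σ : Traj (binAug M),
          if ((fun t => (σ.1 t).1, σ.2) : Traj M) = τ
          then trajProb (binAug M) q (x0, false) σ else 0 :=
  binAug_pushforward_general M x0 q

end
end

section
/- Let M be a finite MDP with alarm region and x_0 ∉ X_a an initial state. For every history-dependent policy π̂ of the binary augmented MDP M̂ with initial state (x_0,0), every trajectory ((x_0,y_0),…,(x_T,y_T), a_0,…,a_{T−1}) with P^π̂-probability strictly greater than zero satisfies, for every t ∈ {0,…,T}: y_t = 1 if and only if there exists s ∈ {0,…,t} with x_s ∈ X_a. Consequently, P^π̂(Y_T = 1) = P^π̂(∃ t ∈ {0,…,T}: X_t ∈ X_a). -/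
/- Common framework: finite MDPs with alarm region, trajectories,
   history-dependent policies, trajectory laws, objectives. -/

attribute [local instance] Classical.propDecidable

noncomputable section

variable {X A : Type} [Fintype X] [Fintype A]

/-!
A trajectory of positive probability starts at `(x0, false)` and only takes transitions of
positive probability, and in the augmented MDP those are exactly the ones that update the flag
by `y' = y || (x' ∈ Xa)`. So along such a trajectory the flag is the running disjunction of
`X_s ∈ Xa`, started from `false` because `x0 ∉ Xa`. At `t = T` the two events therefore agree on
every trajectory of positive probability, and the rest carry no mass.
-/

theorem trajProb_nonneg (M : MDP X A) (p : HistPolicy M) (x0 : X) (τ : Traj M) :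
    0 ≤ trajProb M p x0 τ :=
  mul_nonneg (by split_ifs <;> norm_num) <| Finset.prod_nonneg fun _ _ =>
    mul_nonneg (p.nonneg _ _ _ _) (M.P_nonneg _ _ _)

theorem init_eq_of_trajProb_ne_zero {M : MDP X A} {p : HistPolicy M} {x0 : X} {τ : Traj M}
    (h : trajProb M p x0 τ ≠ 0) : τ.1 0 = x0 := by
  by_contra hne
  simp [trajProb, hne] at h

theorem transition_ne_zero_of_trajProb_ne_zero {M : MDP X A} {p : HistPolicy M} {x0 : X}
    {τ : Traj M} (h : trajProb M p x0 τ ≠ 0) (t : Fin M.T) :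
    M.P (τ.1 t.castSucc) (τ.2 t) (τ.1 t.succ) ≠ 0 :=
  right_ne_zero_of_mul <|
    Finset.prod_ne_zero_iff.mp (right_ne_zero_of_mul h) t (Finset.mem_univ t)

theorem probEvent_congr_of_pos {M : MDP X A} {p : HistPolicy M} {x0 : X}
    {E F : Traj M → Prop} (h : ∀ τ, 0 < trajProb M p x0 τ → (E τ ↔ F τ)) :
    probEvent M p x0 E = probEvent M p x0 F := by
  refine Finset.sum_congr rfl fun τ _ => ?_
  rcases (trajProb_nonneg M p x0 τ).lt_or_eq with hpos | hzero
  · simp only [h τ hpos]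
  · simp only [← hzero, ite_self]

theorem binAug_flag_eq_of_P_ne_zero {M : MDP X A} {s s' : X × Bool} {a : A}
    (h : (binAug M).P s a s' ≠ 0) : s'.2 = (s.2 || decide (s'.1 ∈ M.Xa)) := by
  by_contra hne
  exact h (if_neg hne)

theorem Fin.eq_true_iff_exists_le_of_cumulative_or {n : ℕ} {y p : Fin (n + 1) → Bool}
    (h0 : y 0 = p 0) (hsucc : ∀ t : Fin n, y t.succ = (y t.castSucc || p t.succ))
    (t : Fin (n + 1)) : y t = true ↔ ∃ s ≤ t, p s = true := by
  induction t using Fin.induction with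
  | zero => simp [h0]
  | succ t ih =>
    simp only [hsucc, Bool.or_eq_true, ih]
    constructor
    · rintro (⟨s, hs, hp⟩ | hp)
      · exact ⟨s, hs.trans (Fin.castSucc_le_succ t), hp⟩
      · exact ⟨t.succ, le_rfl, hp⟩
    · rintro ⟨s, hs, hp⟩
      rcases hs.lt_or_eq with hlt | rfl
      · exact Or.inl ⟨s, Fin.le_castSucc_iff.mpr hlt, hp⟩
      · exact Or.inr hp

theorem binAug_flag_iff_of_trajProb_pos (M : MDP X A) {x0 : X} (hx0 : x0 ∉ M.Xa)
    (q : HistPolicy (binAug M)) {σ : Traj (binAug M)}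
    (hσ : 0 < trajProb (binAug M) q (x0, false) σ) (t : Fin (M.T + 1)) :
    (σ.1 t).2 = true ↔ ∃ s ≤ t, (σ.1 s).1 ∈ M.Xa := by
  have hinit := init_eq_of_trajProb_ne_zero hσ.ne'
  have hflag := Fin.eq_true_iff_exists_le_of_cumulative_or (y := fun s => (σ.1 s).2)
    (p := fun s => decide ((σ.1 s).1 ∈ M.Xa)) (by simp [hinit, hx0])
    (fun t => binAug_flag_eq_of_P_ne_zero (transition_ne_zero_of_trajProb_ne_zero hσ.ne' t)) t
  simp only [decide_eq_true_eq] at hflag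
  exact hflag

theorem binAug_flag_correct_general
    (M : MDP X A) (x0 : X) (hx0 : x0 ∉ M.Xa) (q : HistPolicy (binAug M)) :
    (∀ σ : Traj (binAug M), 0 < trajProb (binAug M) q (x0, false) σ →
      ∀ t : Fin (M.T + 1),
        ((σ.1 t).2 = true ↔ ∃ s : Fin (M.T + 1), s ≤ t ∧ (σ.1 s).1 ∈ M.Xa)) ∧
    probEvent (binAug M) q (x0, false)
        (fun σ => (σ.1 (Fin.last (binAug M).T)).2 = true) =
      probEvent (binAug M) q (x0, false) (fun σ => ∃ t, (σ.1 t).1 ∈ M.Xa) := by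
  refine ⟨fun σ hσ => binAug_flag_iff_of_trajProb_pos M hx0 q hσ, ?_⟩
  refine probEvent_congr_of_pos fun σ hσ =>
    (binAug_flag_iff_of_trajProb_pos M hx0 q hσ (Fin.last M.T)).trans ?_
  exact ⟨fun ⟨s, _, hs⟩ => ⟨s, hs⟩, fun ⟨s, hs⟩ => ⟨s, Fin.le_last s, hs⟩⟩

/-- Along every trajectory of positive probability in the
binary augmented MDP, the flag at time `t` is raised iff some state up to time
`t` lies in the alarm region; consequently `P(Y_T = 1) = P(∃ t, X_t ∈ X_a)`. -/
theorem binAug_flag_correct [Nonempty X] [Nonempty A]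
    (M : MDP X A) (x0 : X) (hx0 : x0 ∉ M.Xa) (q : HistPolicy (binAug M)) :
    (∀ σ : Traj (binAug M), 0 < trajProb (binAug M) q (x0, false) σ →
      ∀ t : Fin (M.T + 1),
        ((σ.1 t).2 = true ↔ ∃ s : Fin (M.T + 1), s ≤ t ∧ (σ.1 s).1 ∈ M.Xa)) ∧
    probEvent (binAug M) q (x0, false)
        (fun σ => (σ.1 (Fin.last (binAug M).T)).2 = true) =
      probEvent (binAug M) q (x0, false) (fun σ => ∃ t, (σ.1 t).1 ∈ M.Xa) :=
  binAug_flag_correct_general M x0 hx0 q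

end
end

section
/- Let M be a finite MDP with alarm region and x_0 an initial state. Suppose nonnegative functions ρ_t : X × A → [0,1] for 0 ≤ t ≤ T−1 and ρ_T : X → [0,1] satisfy: (i) Σ_{a∈A} ρ_0(x,a) = 1 if x = x_0 and 0 otherwise; (ii) for every 1 ≤ t ≤ T−1 and x ∈ X, Σ_{a∈A} ρ_t(x,a) = Σ_{x̄∈X,a∈A} P(x|x̄,a)·ρ_{t−1}(x̄,a); and (iii) ρ_T(x) = Σ_{x̄∈X,a∈A} P(x|x̄,a)·ρ_{T−1}(x̄,a) for every x ∈ X. Define a Markov policy π by π_t(a|x) = ρ_t(x,a)/Σ_{ā∈A} ρ_t(x,ā) whenever the denominator is positive, and arbitrarily (e.g., uniform on A) otherwise. Then P^π(X_t = x, A_t = a) = ρ_t(x,a) for all 0 ≤ t ≤ T−1, x ∈ X, a ∈ A, and P^π(X_T = x) = ρ_T(x) for all x ∈ X. -/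
/- Common framework: finite MDPs with alarm region, trajectories,
   history-dependent policies, trajectory laws, objectives. -/

attribute [local instance] Classical.propDecidable

noncomputable section

variable {X A : Type} [Fintype X] [Fintype A]

/-- Occupation measure `ρ_t(x,a) = P^π(X_t = x, A_t = a)` for `0 ≤ t ≤ T-1`. -/
def occ (M : MDP X A) (p : HistPolicy M) (x0 : X) (t : Fin M.T) (x : X) (a : A) : ℝ :=
  probEvent M p x0 (fun τ => τ.1 t.castSucc = x ∧ τ.2 t = a)

/-- Terminal occupation measure `ρ_T(x) = P^π(X_T = x)`. -/
def occT (M : MDP X A) (p : HistPolicy M) (x0 : X) (x : X) : ℝ :=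
  probEvent M p x0 (fun τ => τ.1 (Fin.last M.T) = x)

/-! Summing the trajectory law of a Markov policy over the actions leaves a path sum over states,
i.e. the forward recursion `μ_{t+1} = μ_t K_t` with `K_t(x, y) = Σ_a π_t(a | x) P(y | x, a)`.
Inserting the indicator of `{X_t = x, A_t = a}` at time `t`, and using that the later kernels are
stochastic, gives `P^π(X_t = x, A_t = a) = μ_t(x) π_t(a | x)`. The flow constraints then show by
induction that `μ_t(x) = Σ_a ρ_t(x, a)`, and `μ_t(x) π_t(a | x) = ρ_t(x, a)` because `π_t(· | x)`
normalises `ρ_t(x, ·)` (both sides vanish when `Σ_a ρ_t(x, a) = 0`). -/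

open Matrix

section Propagate

variable {Z R : Type*} [Fintype Z] [CommSemiring R]

def propagate (v : Z → R) (K : ℕ → Matrix Z Z R) : ℕ → Z → R
  | 0 => v
  | k + 1 => propagate v K k ᵥ* K k

@[simp]
theorem propagate_zero (v : Z → R) (K : ℕ → Matrix Z Z R) : propagate v K 0 = v := rfl

@[simp]
theorem propagate_succ (v : Z → R) (K : ℕ → Matrix Z Z R) (k : ℕ) :
    propagate v K (k + 1) = propagate v K k ᵥ* K k := rfl

theorem sum_paths_eq_propagate_dotProduct (v u : Z → R) (K : ℕ → Matrix Z Z R) (n : ℕ) :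
    ∑ z : Fin (n + 1) → Z,
      v (z 0) * (∏ i : Fin n, K i (z i.castSucc) (z i.succ)) * u (z (Fin.last n)) =
      propagate v K n ⬝ᵥ u := by
  induction n generalizing u with
  | zero =>
    rw [← (Equiv.funUnique (Fin 1) Z).symm.sum_comp]
    simp [dotProduct]
  | succ n ih =>
    rw [← (Fin.snocEquiv fun _ => Z).sum_comp, Fintype.sum_prod_type, Finset.sum_comm,
      propagate_succ, ← dotProduct_mulVec, ← ih]
    refine Fintype.sum_congr _ _ fun z => ?_
    simp [Fin.prod_univ_castSucc, Fin.succ_castSucc, -Fin.castSucc_succ, mulVec, dotProduct,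
      Finset.mul_sum, mul_assoc]

theorem propagate_dotProduct_one_eq {v : Z → R} {K : ℕ → Matrix Z Z R} {k n : ℕ} (hkn : k ≤ n)
    (hK : ∀ s, k ≤ s → s < n → K s *ᵥ 1 = 1) :
    propagate v K n ⬝ᵥ 1 = propagate v K k ⬝ᵥ 1 := by
  induction n, hkn using Nat.le_induction with
  | base => rfl
  | succ n hkn ih =>
    rw [propagate_succ, ← dotProduct_mulVec, hK n hkn (lt_add_one n),
      ih fun s h₁ h₂ => hK s h₁ (h₂.trans (lt_add_one n))]

theorem propagate_congr {v : Z → R} {K K' : ℕ → Matrix Z Z R} {k : ℕ}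
    (hK : ∀ s < k, K s = K' s) : propagate v K k = propagate v K' k := by
  induction k with
  | zero => rfl
  | succ k ih =>
    rw [propagate_succ, propagate_succ, hK k (lt_add_one k),
      ih fun s hs => hK s (hs.trans (lt_add_one k))]

end Propagate

-- The value `0` past the horizon is never used.
def MDP.stepKernel (M : MDP X A) (w : Fin M.T → X → A → ℝ) (s : ℕ) : Matrix X X ℝ :=
  if hs : s < M.T then of fun x y => ∑ a, w ⟨s, hs⟩ x a * M.P x a y else 0

theorem MDP.stepKernel_mulVec_one (M : MDP X A) (w : Fin M.T → X → A → ℝ) (t : Fin M.T) :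
    M.stepKernel w t *ᵥ 1 = fun x => ∑ a, w t x a := by
  ext x
  simp only [MDP.stepKernel, t.isLt, dif_pos, mulVec, dotProduct, of_apply, Pi.one_apply, mul_one]
  rw [Finset.sum_comm]
  simp [← Finset.mul_sum, M.P_sum]

theorem MDP.stepKernel_update_of_ne (M : MDP X A) (w : Fin M.T → X → A → ℝ) (t : Fin M.T)
    (g : X → A → ℝ) {s : ℕ} (hs : s ≠ t) :
    M.stepKernel (Function.update w t g) s = M.stepKernel w s := by
  unfold MDP.stepKernel
  split_ifs with h
  · rw [Function.update_of_ne (Fin.ne_of_val_ne hs : (⟨s, h⟩ : Fin M.T) ≠ t)]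
  · rfl

theorem MDP.sum_traj_eq_propagate_dotProduct (M : MDP X A) (v u : X → ℝ)
    (w : Fin M.T → X → A → ℝ) :
    ∑ τ : Traj M, v (τ.1 0) *
        (∏ s, w s (τ.1 s.castSucc) (τ.2 s) * M.P (τ.1 s.castSucc) (τ.2 s) (τ.1 s.succ)) *
        u (τ.1 (Fin.last M.T)) =
      propagate v (M.stepKernel w) M.T ⬝ᵥ u := by
  rw [← sum_paths_eq_propagate_dotProduct, Fintype.sum_prod_type]
  refine Fintype.sum_congr _ _ fun xs => ?_
  dsimp only
  rw [← Finset.sum_mul, ← Finset.mul_sum]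
  congr 2
  convert (Fintype.prod_sum fun s b =>
    w s (xs s.castSucc) b * M.P (xs s.castSucc) b (xs s.succ)).symm using 1
  refine Fintype.prod_congr _ _ fun s => ?_
  simp [MDP.stepKernel]

-- For a Markov policy every history ending in `x` gives this rule (`IsMarkov.π_eq_markovRule`).
def HistPolicy.markovRule [Nonempty A] {M : MDP X A} (p : HistPolicy M) (t : Fin M.T) (x : X) :
    A → ℝ :=
  p.π t (fun _ => x) (fun _ => Classical.arbitrary A)

theorem sum_mul_eq_of_eq_div_sum {ι : Type*} [Fintype ι] {ρ q : ι → ℝ} (hρ : ∀ i, 0 ≤ ρ i)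
    (hq : 0 < ∑ j, ρ j → ∀ i, q i = ρ i / ∑ j, ρ j) (i : ι) :
    (∑ j, ρ j) * q i = ρ i := by
  rcases (Finset.sum_nonneg fun j _ => hρ j).eq_or_lt with h | h
  · rw [← h, zero_mul, (Finset.sum_eq_zero_iff_of_nonneg fun j _ => hρ j).1 h.symm i
      (Finset.mem_univ i)]
  · rw [hq h, mul_div_cancel₀ _ h.ne']

section MarkovPolicy

variable [Nonempty A] {M : MDP X A} {p : HistPolicy M}

theorem IsMarkov.π_eq_markovRule (hp : IsMarkov p)
    (t : Fin M.T) (xs : Fin (t.val + 1) → X) (as : Fin t.val → A) :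
    p.π t xs as = p.markovRule t (xs (Fin.last t)) :=
  hp t _ _ _ _ rfl

theorem trajProb_eq_of_isMarkov (hp : IsMarkov p)
    (x0 : X) (τ : Traj M) :
    trajProb M p x0 τ = (Pi.single x0 1 : X → ℝ) (τ.1 0) *
      ∏ s, p.markovRule s (τ.1 s.castSucc) (τ.2 s) * M.P (τ.1 s.castSucc) (τ.2 s) (τ.1 s.succ) := by
  simp only [trajProb, hp.π_eq_markovRule, Pi.single_apply]
  rfl

theorem occT_eq_propagate (hp : IsMarkov p)
    (x0 x : X) :
    occT M p x0 x = propagate (Pi.single x0 1) (M.stepKernel p.markovRule) M.T x := by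
  rw [← mul_one (propagate _ _ _ x), ← dotProduct_single, ← M.sum_traj_eq_propagate_dotProduct]
  refine Fintype.sum_congr _ _ fun τ => ?_
  simp only [trajProb_eq_of_isMarkov hp, Pi.single_apply]
  split_ifs <;> simp

theorem occ_eq_propagate_mul (hp : IsMarkov p)
    (x0 : X) (t : Fin M.T) (x : X) (a : A) :
    occ M p x0 t x a =
      propagate (Pi.single x0 1) (M.stepKernel p.markovRule) t x * p.markovRule t x a := by
  -- Weighting the action at time `t` by the indicator of `{X_t = x, A_t = a}` makes the event a
  -- path sum; the kernels after time `t` are stochastic, so they preserve its total mass.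
  set w := Function.update p.markovRule t fun x' b =>
    if x' = x ∧ b = a then p.markovRule t x' b else 0
  have hK : ∀ s : ℕ, s ≠ t → M.stepKernel w s = M.stepKernel p.markovRule s :=
    fun s hs => M.stepKernel_update_of_ne _ t _ hs
  have hocc : occ M p x0 t x a = propagate (Pi.single x0 1) (M.stepKernel w) M.T ⬝ᵥ 1 := by
    rw [← M.sum_traj_eq_propagate_dotProduct]
    refine Fintype.sum_congr _ _ fun τ => ?_
    simp only [trajProb_eq_of_isMarkov hp, Pi.one_apply, mul_one]
    split_ifs with hE
    · congr 1
      refine Fintype.prod_congr _ _ fun s => ?_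
      rcases eq_or_ne s t with rfl | hs
      · simp [w, hE]
      · simp [w, Function.update_of_ne hs]
    · refine (mul_eq_zero_of_right _ (Finset.prod_eq_zero (Finset.mem_univ t) ?_)).symm
      simp [w, hE]
  have hmass : propagate (Pi.single x0 1) (M.stepKernel w) M.T ⬝ᵥ 1 =
      propagate (Pi.single x0 1) (M.stepKernel w) (t + 1) ⬝ᵥ 1 := by
    refine propagate_dotProduct_one_eq t.isLt fun s hts hs => ?_
    rw [hK s (by omega), show s = (⟨s, hs⟩ : Fin M.T) from rfl, M.stepKernel_mulVec_one]
    exact funext fun y => p.sum_one _ _ _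
  rw [hocc, hmass, propagate_succ, ← dotProduct_mulVec, M.stepKernel_mulVec_one,
    propagate_congr fun s hs => hK s hs.ne]
  have hw : (fun x' => ∑ b, w t x' b) = Pi.single x (p.markovRule t x a) := by
    ext x'
    rcases eq_or_ne x' x with rfl | hx <;> simp [w, *]
  rw [hw, dotProduct_single]

variable {ρ : Fin M.T → X → A → ℝ}

theorem propagate_succ_eq_of_eq_sum (hρ : ∀ t x a, 0 ≤ ρ t x a)
    (hp : ∀ t x, 0 < ∑ a, ρ t x a → ∀ a, p.markovRule t x a = ρ t x a / ∑ a', ρ t x a')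
    (v : X → ℝ) (t : Fin M.T)
    (ht : ∀ x, propagate v (M.stepKernel p.markovRule) t x = ∑ a, ρ t x a) (y : X) :
    propagate v (M.stepKernel p.markovRule) (t + 1) y = ∑ x, ∑ a, M.P x a y * ρ t x a := by
  simp only [propagate_succ, vecMul, dotProduct, ht]
  refine Fintype.sum_congr _ _ fun x => ?_
  simp only [MDP.stepKernel, t.isLt, dif_pos, of_apply, Finset.mul_sum]
  refine Fintype.sum_congr _ _ fun a => ?_
  rw [← mul_assoc, sum_mul_eq_of_eq_div_sum (hρ t x) (hp t x), mul_comm]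

theorem propagate_eq_sum_of_flow (hρ : ∀ t x a, 0 ≤ ρ t x a)
    (hp : ∀ t x, 0 < ∑ a, ρ t x a → ∀ a, p.markovRule t x a = ρ t x a / ∑ a', ρ t x a')
    (x0 : X) (h0 : ∀ x : X, ∑ a : A, ρ ⟨0, M.hT⟩ x a = if x = x0 then 1 else 0)
    (hflow : ∀ t : Fin M.T, 1 ≤ t.val → ∀ x : X,
      ∑ a : A, ρ t x a =
        ∑ x' : X, ∑ a : A, M.P x' a x * ρ ⟨t.val - 1, (Nat.sub_le _ _).trans_lt t.isLt⟩ x' a)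
    (s : ℕ) (hs : s < M.T) (x : X) :
    propagate (Pi.single x0 1) (M.stepKernel p.markovRule) s x = ∑ a, ρ ⟨s, hs⟩ x a := by
  induction s generalizing x with
  | zero => rw [h0, propagate_zero, Pi.single_apply]
  | succ s ih =>
    rw [propagate_succ_eq_of_eq_sum hρ hp _ ⟨s, by omega⟩ (ih (by omega)),
      hflow ⟨s + 1, hs⟩ le_add_self]
    rfl

end MarkovPolicy

/-- Any family of functions satisfying the linear flow
constraints is realized as the occupation measures of the Markov policy
obtained by normalization (arbitrary where the denominator vanishes). -/
theorem occupation_realized_by_markov_policy [Nonempty A]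
    (M : MDP X A) (x0 : X)
    (ρ : Fin M.T → X → A → ℝ) (ρT : X → ℝ)
    (hmem : ∀ (t : Fin M.T) (x : X) (a : A), ρ t x a ∈ Set.Icc (0 : ℝ) 1)
    (h0 : ∀ x : X, ∑ a : A, ρ ⟨0, M.hT⟩ x a = if x = x0 then 1 else 0)
    (hflow : ∀ t : Fin M.T, 1 ≤ t.val → ∀ x : X,
      ∑ a : A, ρ t x a =
        ∑ x' : X, ∑ a : A,
          M.P x' a x * ρ ⟨t.val - 1, by have := t.isLt; omega⟩ x' a)
    (hfinal : ∀ x : X, ρT x =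
      ∑ x' : X, ∑ a : A,
        M.P x' a x * ρ ⟨M.T - 1, by have := M.hT; omega⟩ x' a)
    (p : HistPolicy M) (hpM : IsMarkov p)
    (hp : ∀ (t : Fin M.T) (xs : Fin (t.val + 1) → X) (as : Fin t.val → A) (a : A),
      0 < (∑ a' : A, ρ t (xs (Fin.last t.val)) a') →
      p.π t xs as a =
        ρ t (xs (Fin.last t.val)) a / ∑ a' : A, ρ t (xs (Fin.last t.val)) a') :
    (∀ (t : Fin M.T) (x : X) (a : A), occ M p x0 t x a = ρ t x a) ∧
    (∀ x : X, occT M p x0 x = ρT x) := by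
  have hρ : ∀ t x a, 0 ≤ ρ t x a := fun t x a => (hmem t x a).1
  have hrule : ∀ t x, 0 < ∑ a, ρ t x a → ∀ a, p.markovRule t x a = ρ t x a / ∑ a', ρ t x a' :=
    fun t x h a => hp t _ _ a h
  have hstate := propagate_eq_sum_of_flow hρ hrule x0 h0 hflow
  refine ⟨fun t x a => ?_, fun x => ?_⟩
  · rw [occ_eq_propagate_mul hpM, hstate t t.isLt x]
    exact sum_mul_eq_of_eq_div_sum (hρ t x) (hrule t x) a
  · have hlast := propagate_succ_eq_of_eq_sum hρ hrule (Pi.single x0 1)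
      ⟨M.T - 1, Nat.sub_lt M.hT one_pos⟩ (hstate _ (Nat.sub_lt M.hT one_pos)) x
    rw [occT_eq_propagate hpM, hfinal, ← hlast, Nat.sub_add_cancel M.hT]
end
end
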